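/- Let Γ be a graded graph and I an ideal of Γ. The restriction map φ ↦ φ|_I is a bijection from the set of indecomposable finite or semifinite harmonic functions on Γ that do not vanish identically on I, onto the set of indecomposable finite or semifinite harmonic functions on I, with inverse Ext given by Ext(φ)(λ) = lim_{N→∞} Σ_{μ∈I, |μ|=N} dim(λ,μ)φ(μ). -/

import Mathlib

open Filter Topology ENNReal
open scoped Classical

noncomputable section

structure GradedGraph where
  V : Type
  lvl : V → ℕ
  levelFinite : ∀ n : ℕ, {v : V | lvl v = n}.Finite
  k : V → V → ℝ
  k_nonneg : ∀ a b, 0 ≤ k a b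
  k_grade : ∀ a b, k a b ≠ 0 → lvl b = lvl a + 1
  exists_up : ∀ a, ∃ b, 0 < k a b

namespace GradedGraph

variable (G : GradedGraph)

/-- The edge relation `λ ↗ μ`. -/
def Adj (a b : G.V) : Prop := 0 < G.k a b

/-- The path order: `a ≤ b` iff there is a (possibly empty) path from `a` to `b`. -/
def Le : G.V → G.V → Prop := Relation.ReflTransGen G.Adj

/-- `dimAux n a b` : weighted number of paths of length `n` from `a` to `b`. -/
def dimAux : ℕ → G.V → G.V → ℝ
  | 0, a, b => if a = b then 1 else 0
  | n + 1, a, b => ∑ᶠ c, dimAux n a c * G.k c b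

/-- The shifted dimension `dim(a,b)`: weighted number of paths from `a` to `b`. -/
def dim (a b : G.V) : ℝ := G.dimAux (G.lvl b - G.lvl a) a b

def IsIdeal (I : Set G.V) : Prop := ∀ a ∈ I, ∀ b, G.Le a b → b ∈ I

def IsCoideal (J : Set G.V) : Prop := ∀ a ∈ J, ∀ b, G.Le b a → b ∈ J

def IsSaturatedIdeal (I : Set G.V) : Prop :=
  G.IsIdeal I ∧ ∀ a, (∀ b, G.Adj a b → b ∈ I) → a ∈ I

def IsSaturatedCoideal (J : Set G.V) : Prop :=
  G.IsCoideal J ∧ ∀ a ∈ J, ∃ b ∈ J, G.Adj a b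

def IsPrimitiveCoideal (J : Set G.V) : Prop :=
  G.IsSaturatedCoideal J ∧ ∀ J1 J2 : Set G.V, G.IsSaturatedCoideal J1 →
    G.IsSaturatedCoideal J2 → J = J1 ∪ J2 → J = J1 ∨ J = J2

/-- A harmonic function `φ : Γ → ℝ≥0 ∪ {+∞}`. -/
def Harmonic (φ : G.V → ℝ≥0∞) : Prop :=
  ∀ a, φ a = ∑ᶠ b, ENNReal.ofReal (G.k a b) * φ b

/-- The submodule of relations `λ = Σ_{μ : λ↗μ} κ(λ,μ)·μ` in the free module on vertices. -/
def relSub : Submodule ℝ (G.V →₀ ℝ) :=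
  Submodule.span ℝ
    {x | ∃ a : G.V, x = Finsupp.single a 1 - ∑ᶠ b, G.k a b • Finsupp.single b (1 : ℝ)}

/-- The group `K_0(Γ)`. -/
abbrev K0 := (G.V →₀ ℝ) ⧸ G.relSub

def toK0 : (G.V →₀ ℝ) →ₗ[ℝ] G.K0 := G.relSub.mkQ

/-- The class of a vertex in `K_0(Γ)`. -/
def vtx (a : G.V) : G.K0 := G.toK0 (Finsupp.single a 1)

/-- The positive cone `K_0^+(Γ)` generated by the vertices. -/
def cone : Set G.K0 := {x | ∃ c : G.V →₀ ℝ, (∀ a, 0 ≤ c a) ∧ x = G.toK0 c}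

/-- The partial order `x ≤_K y` defined by the cone. -/
def leK (x y : G.K0) : Prop := y - x ∈ G.cone

/-- The value of (the `ℝ≥0`-linear extension of) `φ` on a nonnegative element of the
free module on vertices. -/
def evalC (φ : G.V → ℝ≥0∞) (c : G.V →₀ ℝ) : ℝ≥0∞ :=
  ∑ a ∈ c.support, ENNReal.ofReal (c a) * φ a

/-- A semifinite harmonic function: it is harmonic, not everywhere finite, and its value
on any element of the cone is the supremum of its finite values on smaller cone elements
(stated on nonnegative representatives). -/
def Semifinite (φ : G.V → ℝ≥0∞) : Prop :=
  G.Harmonic φ ∧ (∃ a, φ a = ⊤) ∧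
    ∀ c : G.V →₀ ℝ, (∀ a, 0 ≤ c a) →
      G.evalC φ c = ⨆ d : {d : G.V →₀ ℝ //
        (∀ a, 0 ≤ d a) ∧ G.leK (G.toK0 d) (G.toK0 c) ∧ G.evalC φ d ≠ ⊤},
          G.evalC φ d.1

/-- A finite or semifinite harmonic function. -/
def FinOrSemifinite (φ : G.V → ℝ≥0∞) : Prop :=
  (G.Harmonic φ ∧ ∀ a, φ a ≠ ⊤) ∨ G.Semifinite φ

/-- An indecomposable (finite or semifinite, not identically zero) harmonic function:
any finite or semifinite harmonic `ψ ≤ φ` not vanishing identically on the finiteness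
ideal of `φ` is proportional to `φ` on the finiteness ideal of `φ`. -/
def Indecomposable (φ : G.V → ℝ≥0∞) : Prop :=
  G.FinOrSemifinite φ ∧ (∃ a, φ a ≠ 0) ∧
    ∀ ψ : G.V → ℝ≥0∞, G.FinOrSemifinite ψ → (∀ a, ψ a ≤ φ a) →
      (∃ a, φ a ≠ ⊤ ∧ ψ a ≠ 0) →
        ∃ C : ℝ≥0∞, ∀ a, φ a ≠ ⊤ → ψ a = C * φ a

end GradedGraph

structure BranchingGraph extends GradedGraph where
  root : V
  root_lvl : lvl root = 0
  root_unique : ∀ v, lvl v = 0 → v = root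
  exists_down : ∀ v, lvl v ≠ 0 → ∃ u, 0 < k u v

end

/-- An ideal of a graded graph is itself a graded graph with the restricted
multiplicity function. -/
def GradedGraph.restrict (G : GradedGraph) (I : Set G.V) (hI : G.IsIdeal I) :
    GradedGraph where
  V := I
  lvl v := G.lvl v.1
  levelFinite n := by
    have : ((↑· : I → G.V) ⁻¹' {v : G.V | G.lvl v = n}).Finite :=
      Set.Finite.preimage (Subtype.coe_injective.injOn) (G.levelFinite n)
    exact this
  k a b := G.k a.1 b.1
  k_nonneg a b := G.k_nonneg a.1 b.1
  k_grade a b h := G.k_grade a.1 b.1 h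
  exists_up a := by
    obtain ⟨b, hb⟩ := G.exists_up a.1
    exact ⟨⟨b, hI a.1 a.2 b (Relation.ReflTransGen.single hb)⟩, hb⟩

attribute [reducible] GradedGraph.restrict

namespace GradedGraph

noncomputable section

variable (G : GradedGraph)

/-- The finset of vertices at level `N`. -/
def level (N : ℕ) : Finset G.V := (G.levelFinite N).toFinset

variable {G}

lemma mem_level {N : ℕ} {v : G.V} : v ∈ G.level N ↔ G.lvl v = N :=
  (G.levelFinite N).mem_toFinset

lemma dimAux_nonneg (n : ℕ) (a b : G.V) : 0 ≤ G.dimAux n a b := by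
  induction n generalizing b with
  | zero => simp only [dimAux]; positivity
  | succ n ih =>
    rw [dimAux]
    exact finsum_nonneg fun c => mul_nonneg (ih c) (G.k_nonneg c b)

lemma exists_ne_zero_of_dimAux_succ {n : ℕ} {a b : G.V}
    (h : G.dimAux (n+1) a b ≠ 0) : ∃ c, G.dimAux n a c ≠ 0 ∧ G.k c b ≠ 0 := by
  rw [dimAux] at h
  have : ∃ c, G.dimAux n a c * G.k c b ≠ 0 := by
    by_contra hc
    push_neg at hc
    simp [funext hc] at h
  obtain ⟨c, hc⟩ := this
  exact ⟨c, fun h0 => hc (by simp [h0]), fun h0 => hc (by simp [h0])⟩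

lemma dimAux_ne_zero_lvl {n : ℕ} {a b : G.V} (h : G.dimAux n a b ≠ 0) :
    G.lvl b = G.lvl a + n := by
  induction n generalizing b with
  | zero =>
    rw [dimAux] at h
    have : a = b := by by_contra hab; simp [hab] at h
    simp [this]
  | succ n ih =>
    obtain ⟨c, h1, h2⟩ := exists_ne_zero_of_dimAux_succ h
    rw [G.k_grade c b h2, ih h1]
    omega

lemma dimAux_le {n : ℕ} {a b : G.V} (h : G.dimAux n a b ≠ 0) : G.Le a b := by
  induction n generalizing b with
  | zero =>
    rw [dimAux] at h
    have : a = b := by by_contra hab; simp [hab] at h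
    exact this ▸ Relation.ReflTransGen.refl
  | succ n ih =>
    obtain ⟨c, h1, h2⟩ := exists_ne_zero_of_dimAux_succ h
    exact Relation.ReflTransGen.tail (ih h1) (lt_of_le_of_ne (G.k_nonneg c b) (Ne.symm h2))

lemma dimAux_succ_sum (n : ℕ) (a b : G.V) :
    G.dimAux (n + 1) a b = ∑ c ∈ G.level (G.lvl a + n), G.dimAux n a c * G.k c b := by
  rw [dimAux]
  apply finsum_eq_sum_of_support_subset
  intro c hc
  rw [Function.mem_support] at hc
  have h1 : G.dimAux n a c ≠ 0 := fun h0 => hc (by simp [h0])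
  simp only [Finset.coe_sort_coe, Finset.mem_coe]
  exact mem_level.2 (dimAux_ne_zero_lvl h1)

lemma dim_nonneg (a b : G.V) : 0 ≤ G.dim a b := dimAux_nonneg _ a b

lemma dim_eq_dimAux {n : ℕ} {a b : G.V} (h : G.lvl b = G.lvl a + n) :
    G.dim a b = G.dimAux n a b := by
  have : G.lvl b - G.lvl a = n := by omega
  rw [dim, this]

lemma dim_self (a : G.V) : G.dim a a = 1 := by
  rw [dim, Nat.sub_self, dimAux, if_pos rfl]

lemma dim_eq_zero_of_le {a b : G.V} (h : G.lvl b ≤ G.lvl a) (hne : a ≠ b) : G.dim a b = 0 := by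
  have : G.lvl b - G.lvl a = 0 := by omega
  rw [dim, this, dimAux, if_neg hne]

lemma dim_ne_zero_le {a b : G.V} (h : G.dim a b ≠ 0) : G.Le a b := dimAux_le h

lemma dim_last_sum {a : G.V} {N : ℕ} (hN : G.lvl a ≤ N) {b : G.V} (hb : G.lvl b = N + 1) :
    G.dim a b = ∑ c ∈ G.level N, G.dim a c * G.k c b := by
  have h1 : G.lvl b = G.lvl a + (N - G.lvl a + 1) := by omega
  rw [dim_eq_dimAux h1, dimAux_succ_sum]
  have h2 : G.lvl a + (N - G.lvl a) = N := by omega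
  rw [h2]
  apply Finset.sum_congr rfl
  intro c hc
  rw [dim_eq_dimAux (n := N - G.lvl a) (by rw [mem_level.1 hc]; omega)]

lemma dimAux_succ_first (n : ℕ) (a b : G.V) :
    G.dimAux (n + 1) a b = ∑ c ∈ G.level (G.lvl a + 1), G.k a c * G.dimAux n c b := by
  induction n generalizing b with
  | zero =>
    rw [dimAux_succ_sum]
    simp only [Nat.add_zero]
    rw [Finset.sum_eq_single_of_mem a (mem_level.2 rfl)]
    · have h00 : G.dimAux 0 a a = 1 := by simp [dimAux]
      have hR : ∑ c ∈ G.level (G.lvl a + 1), G.k a c * G.dimAux 0 c b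
          = if b ∈ G.level (G.lvl a + 1) then G.k a b else 0 := by
        simp_rw [dimAux, mul_ite, mul_one, mul_zero]
        exact Finset.sum_ite_eq' _ b (fun c => G.k a c)
      rw [h00, one_mul, hR]
      by_cases hb : G.lvl b = G.lvl a + 1
      · rw [if_pos (mem_level.2 hb)]
      · rw [if_neg (fun hmem => hb (mem_level.1 hmem))]
        by_contra h0
        exact hb (G.k_grade a b h0)
    · intro c _ hc
      simp [dimAux, if_neg (Ne.symm hc)]
  | succ n ih =>
    rw [dimAux_succ_sum]
    calc ∑ c ∈ G.level (G.lvl a + (n+1)), G.dimAux (n+1) a c * G.k c b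
        = ∑ c ∈ G.level (G.lvl a + (n+1)), ∑ d ∈ G.level (G.lvl a + 1),
            G.k a d * G.dimAux n d c * G.k c b := by
          apply Finset.sum_congr rfl
          intro c _
          rw [ih c, Finset.sum_mul]
      _ = ∑ d ∈ G.level (G.lvl a + 1), ∑ c ∈ G.level (G.lvl a + (n+1)),
            G.k a d * (G.dimAux n d c * G.k c b) := by
          rw [Finset.sum_comm]
          exact Finset.sum_congr rfl fun _ _ => Finset.sum_congr rfl fun _ _ => by ring
      _ = ∑ d ∈ G.level (G.lvl a + 1), G.k a d * G.dimAux (n+1) d b := by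
          apply Finset.sum_congr rfl
          intro d hd
          rw [← Finset.mul_sum, dimAux_succ_sum]
          have h3 : G.lvl d = G.lvl a + 1 := mem_level.1 hd
          rw [h3, show G.lvl a + 1 + n = G.lvl a + (n+1) from by omega]

lemma dim_first_sum {a b : G.V} (h : G.lvl a < G.lvl b) :
    G.dim a b = ∑ c ∈ G.level (G.lvl a + 1), G.k a c * G.dim c b := by
  have h1 : G.lvl b = G.lvl a + (G.lvl b - G.lvl a - 1 + 1) := by omega
  rw [dim_eq_dimAux h1, dimAux_succ_first]
  apply Finset.sum_congr rfl
  intro c hc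
  congr 1
  rw [dim_eq_dimAux (n := G.lvl b - G.lvl a - 1) (by rw [mem_level.1 hc]; omega)]

end

end GradedGraph
namespace GradedGraph

noncomputable section

variable {G : GradedGraph}

lemma harmonic_sum_level {φ : G.V → ℝ≥0∞} (h : G.Harmonic φ) (a : G.V) :
    φ a = ∑ b ∈ G.level (G.lvl a + 1), ENNReal.ofReal (G.k a b) * φ b := by
  rw [h a]
  apply finsum_eq_sum_of_support_subset
  intro b hb
  rw [Function.mem_support] at hb
  have : G.k a b ≠ 0 := by
    intro h0
    rw [h0] at hb
    simp at hb
  simp only [Finset.coe_sort_coe, Finset.mem_coe]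
  exact mem_level.2 (G.k_grade a b this)

lemma ofReal_dim_last {a : G.V} {N : ℕ} (hN : G.lvl a ≤ N) {b : G.V} (hb : G.lvl b = N + 1) :
    ENNReal.ofReal (G.dim a b)
      = ∑ c ∈ G.level N, ENNReal.ofReal (G.dim a c) * ENNReal.ofReal (G.k c b) := by
  rw [dim_last_sum hN hb, ENNReal.ofReal_sum_of_nonneg
    (fun c _ => mul_nonneg (dim_nonneg a c) (G.k_nonneg c b))]
  exact Finset.sum_congr rfl fun c _ => ENNReal.ofReal_mul (dim_nonneg a c)

lemma ofReal_dim_first {a b : G.V} (h : G.lvl a < G.lvl b) :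
    ENNReal.ofReal (G.dim a b)
      = ∑ c ∈ G.level (G.lvl a + 1), ENNReal.ofReal (G.k a c) * ENNReal.ofReal (G.dim c b) := by
  rw [dim_first_sum h, ENNReal.ofReal_sum_of_nonneg
    (fun c _ => mul_nonneg (G.k_nonneg a c) (dim_nonneg c b))]
  exact Finset.sum_congr rfl fun c _ => ENNReal.ofReal_mul (G.k_nonneg a c)

/-- Iterated harmonicity: the value of a harmonic function is obtained by
pushing to any higher level. -/
lemma harmonic_level_eq {φ : G.V → ℝ≥0∞} (h : G.Harmonic φ) (a : G.V) :
    ∀ N, G.lvl a ≤ N → φ a = ∑ μ ∈ G.level N, ENNReal.ofReal (G.dim a μ) * φ μ := by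
  refine Nat.le_induction ?_ ?_
  · rw [Finset.sum_eq_single_of_mem a (mem_level.2 rfl)]
    · rw [dim_self]; simp
    · intro c hc hne
      rw [dim_eq_zero_of_le (le_of_eq (mem_level.1 hc)) (Ne.symm hne)]
      simp
  · intro N hN IH
    rw [IH]
    have step : ∀ μ ∈ G.level N, ENNReal.ofReal (G.dim a μ) * φ μ
        = ∑ b ∈ G.level (N+1), ENNReal.ofReal (G.dim a μ) * (ENNReal.ofReal (G.k μ b) * φ b) := by
      intro μ hμ
      rw [harmonic_sum_level h μ, mem_level.1 hμ, Finset.mul_sum]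
    rw [Finset.sum_congr rfl step, Finset.sum_comm]
    apply Finset.sum_congr rfl
    intro b hb
    rw [ofReal_dim_last hN (mem_level.1 hb), Finset.sum_mul]
    exact Finset.sum_congr rfl fun μ _ => by ring

end

end GradedGraph
namespace GradedGraph

noncomputable section

variable (G : GradedGraph)

/-- The linear functional computing the coefficient at `μ` of the expansion of an element
of the free module to the level of `μ`. -/
def EdimL (μ : G.V) : (G.V →₀ ℝ) →ₗ[ℝ] ℝ :=
  Finsupp.linearCombination ℝ (fun x => G.dim x μ)

def Edim (c : G.V →₀ ℝ) (μ : G.V) : ℝ := G.EdimL μ c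

variable {G}

lemma Edim_apply (c : G.V →₀ ℝ) (μ : G.V) :
    G.Edim c μ = ∑ x ∈ c.support, c x * G.dim x μ := by
  rw [Edim, EdimL, Finsupp.linearCombination_apply, Finsupp.sum]
  rfl

lemma Edim_single (x : G.V) (t : ℝ) (μ : G.V) :
    G.Edim (Finsupp.single x t) μ = t * G.dim x μ := by
  rw [Edim, EdimL, Finsupp.linearCombination_single]
  rfl

lemma Edim_nonneg {c : G.V →₀ ℝ} (hc : ∀ a, 0 ≤ c a) (μ : G.V) : 0 ≤ G.Edim c μ := by
  rw [Edim_apply]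
  exact Finset.sum_nonneg fun x _ => mul_nonneg (hc x) (dim_nonneg x μ)

lemma Edim_eq_zero_of_not_le {c : G.V →₀ ℝ} {μ : G.V}
    (h : ∀ x ∈ c.support, ¬ G.Le x μ) : G.Edim c μ = 0 := by
  rw [Edim_apply]
  apply Finset.sum_eq_zero
  intro x hx
  rcases eq_or_ne (G.dim x μ) 0 with h0 | h0
  · rw [h0, mul_zero]
  · exact absurd (dim_ne_zero_le h0) (h x hx)

/-- The canonical finsum appearing in the relations, as a finite sum. -/
lemma gen_finsum_eq (a : G.V) :
    (∑ᶠ b, G.k a b • Finsupp.single b (1:ℝ))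
      = ∑ b ∈ G.level (G.lvl a + 1), Finsupp.single b (G.k a b) := by
  have h1 : (∑ᶠ b, G.k a b • Finsupp.single b (1:ℝ))
      = ∑ b ∈ G.level (G.lvl a + 1), G.k a b • Finsupp.single b (1:ℝ) := by
    apply finsum_eq_sum_of_support_subset
    intro b hb
    rw [Function.mem_support] at hb
    have : G.k a b ≠ 0 := by
      intro h0; rw [h0, zero_smul] at hb; exact hb rfl
    simp only [Finset.coe_sort_coe, Finset.mem_coe]
    exact mem_level.2 (G.k_grade a b this)
  rw [h1]
  exact Finset.sum_congr rfl fun b _ => by rw [Finsupp.smul_single, smul_eq_mul, mul_one]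

lemma gen_mem_relSub (a : G.V) :
    Finsupp.single a (1:ℝ) - ∑ b ∈ G.level (G.lvl a + 1), Finsupp.single b (G.k a b)
      ∈ G.relSub := by
  rw [← gen_finsum_eq]
  exact Submodule.subset_span ⟨a, rfl⟩

lemma Edim_rel_eventually {r : G.V →₀ ℝ} (hr : r ∈ G.relSub) :
    ∃ L, ∀ μ : G.V, L ≤ G.lvl μ → G.Edim r μ = 0 := by
  induction hr using Submodule.span_induction with
  | mem x hx =>
    obtain ⟨a, rfl⟩ := hx
    refine ⟨G.lvl a + 1, fun μ hμ => ?_⟩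
    rw [gen_finsum_eq]
    have : G.Edim (Finsupp.single a 1 -
        ∑ b ∈ G.level (G.lvl a + 1), Finsupp.single b (G.k a b)) μ
        = G.Edim (Finsupp.single a 1) μ
          - ∑ b ∈ G.level (G.lvl a + 1), G.Edim (Finsupp.single b (G.k a b)) μ := by
      rw [Edim, map_sub, map_sum]; rfl
    rw [this, Edim_single, one_mul]
    have hsum : ∑ b ∈ G.level (G.lvl a + 1), G.Edim (Finsupp.single b (G.k a b)) μ
        = ∑ b ∈ G.level (G.lvl a + 1), G.k a b * G.dim b μ :=
      Finset.sum_congr rfl fun b _ => Edim_single b (G.k a b) μ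
    rw [hsum, ← dim_first_sum (by omega), sub_self]
  | zero => exact ⟨0, fun μ _ => by simp only [Edim]; rw [map_zero]⟩
  | add x y hx hy ihx ihy =>
    obtain ⟨L1, h1⟩ := ihx
    obtain ⟨L2, h2⟩ := ihy
    refine ⟨max L1 L2, fun μ hμ => ?_⟩
    have e1 := h1 μ (le_trans (le_max_left _ _) hμ)
    have e2 := h2 μ (le_trans (le_max_right _ _) hμ)
    simp only [Edim] at e1 e2 ⊢
    rw [map_add, e1, e2, add_zero]
  | smul t x hx ihx =>
    obtain ⟨L, h1⟩ := ihx
    refine ⟨L, fun μ hμ => ?_⟩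
    have := h1 μ hμ
    simp only [Edim] at this ⊢
    rw [map_smul, smul_eq_mul, this, mul_zero]

lemma toK0_eq_iff {x y : G.V →₀ ℝ} : G.toK0 x = G.toK0 y ↔ x - y ∈ G.relSub := by
  rw [toK0, Submodule.mkQ_apply, Submodule.mkQ_apply, Submodule.Quotient.eq]

lemma leK_iff {d c : G.V →₀ ℝ} : G.leK (G.toK0 d) (G.toK0 c)
    ↔ ∃ p : G.V →₀ ℝ, (∀ a, 0 ≤ p a) ∧ c - d - p ∈ G.relSub := by
  constructor
  · rintro ⟨p, hp, heq⟩
    refine ⟨p, hp, ?_⟩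
    rw [← toK0_eq_iff]
    have : G.toK0 (c - d) = G.toK0 p := by rw [map_sub, heq]
    rw [← this]
  · rintro ⟨p, hp, hmem⟩
    refine ⟨p, hp, ?_⟩
    rw [← map_sub]
    exact toK0_eq_iff.2 hmem

lemma leK_of_le {d c : G.V →₀ ℝ} (h : ∀ a, d a ≤ c a) :
    G.leK (G.toK0 d) (G.toK0 c) := by
  rw [leK_iff]
  refine ⟨c - d, fun a => by simpa using h a, by simp⟩

lemma leK_refl (c : G.V →₀ ℝ) : G.leK (G.toK0 c) (G.toK0 c) := leK_of_le fun _ => le_rfl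

lemma leK_trans {x y z : G.K0} (h1 : G.leK x y) (h2 : G.leK y z) : G.leK x z := by
  obtain ⟨p, hp, hep⟩ := h1
  obtain ⟨q, hq, heq⟩ := h2
  refine ⟨p + q, fun a => by simpa using add_nonneg (hp a) (hq a), ?_⟩
  rw [map_add, ← hep, ← heq]
  abel

/-- The fundamental comparison lemma: `K₀`-inequality implies eventual pointwise
inequality of level expansions. -/
lemma Edim_mono_of_leK {d c : G.V →₀ ℝ} (h : G.leK (G.toK0 d) (G.toK0 c)) :
    ∃ L, ∀ μ : G.V, L ≤ G.lvl μ → G.Edim d μ ≤ G.Edim c μ := by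
  rw [leK_iff] at h
  obtain ⟨p, hp, hmem⟩ := h
  obtain ⟨L, hL⟩ := Edim_rel_eventually hmem
  refine ⟨L, fun μ hμ => ?_⟩
  have key : G.Edim c μ - G.Edim d μ - G.Edim p μ = 0 := by
    have : G.Edim (c - d - p) μ = G.Edim c μ - G.Edim d μ - G.Edim p μ := by
      rw [Edim, map_sub, map_sub]; rfl
    rw [← this, hL μ hμ]
  have := Edim_nonneg hp μ
  linarith

variable (G)

/-- Expansion of an element of the free module at level `N`, as an element of the
free module supported on level `N`. -/
def Ef (N : ℕ) (c : G.V →₀ ℝ) : G.V →₀ ℝ :=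
  ∑ μ ∈ G.level N, Finsupp.single μ (G.Edim c μ)

variable {G}

lemma Ef_apply (N : ℕ) (c : G.V →₀ ℝ) (x : G.V) :
    (G.Ef N c) x = if G.lvl x = N then G.Edim c x else 0 := by
  rw [Ef, Finset.sum_apply']
  have h1 : ∀ μ ∈ G.level N, (Finsupp.single μ (G.Edim c μ)) x
      = if μ = x then G.Edim c μ else 0 := fun μ _ => Finsupp.single_apply
  rw [Finset.sum_congr rfl h1, Finset.sum_ite_eq' (G.level N) x (fun μ => G.Edim c μ)]
  by_cases hx : G.lvl x = N
  · rw [if_pos (mem_level.2 hx), if_pos hx]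
  · rw [if_neg (fun hm => hx (mem_level.1 hm)), if_neg hx]

lemma Ef_support_subset (N : ℕ) (c : G.V →₀ ℝ) : (G.Ef N c).support ⊆ G.level N := by
  intro x hx
  rw [Finsupp.mem_support_iff, Ef_apply] at hx
  by_cases h : G.lvl x = N
  · exact mem_level.2 h
  · rw [if_neg h] at hx; exact absurd rfl hx

lemma Ef_nonneg {N : ℕ} {c : G.V →₀ ℝ} (hc : ∀ a, 0 ≤ c a) (x : G.V) : 0 ≤ (G.Ef N c) x := by
  rw [Ef_apply]
  by_cases h : G.lvl x = N
  · rw [if_pos h]; exact Edim_nonneg hc x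
  · rw [if_neg h]

lemma toK0_single_expand {x : G.V} :
    ∀ N, G.lvl x ≤ N →
      G.toK0 (Finsupp.single x 1)
        = G.toK0 (∑ μ ∈ G.level N, Finsupp.single μ (G.dim x μ)) := by
  refine Nat.le_induction ?_ ?_
  · congr 1
    rw [Finset.sum_eq_single_of_mem x (mem_level.2 rfl)]
    · rw [dim_self]
    · intro c hc hne
      rw [dim_eq_zero_of_le (le_of_eq (mem_level.1 hc)) (Ne.symm hne), Finsupp.single_zero]
  · intro N hN IH
    rw [IH]
    rw [toK0_eq_iff]
    have key : ∀ μ ∈ G.level N,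
        Finsupp.single μ (G.dim x μ)
          - ∑ ν ∈ G.level (N+1), Finsupp.single ν (G.dim x μ * G.k μ ν) ∈ G.relSub := by
      intro μ hμ
      have h2 : Finsupp.single μ (G.dim x μ)
          - ∑ ν ∈ G.level (N+1), Finsupp.single ν (G.dim x μ * G.k μ ν)
          = G.dim x μ • (Finsupp.single μ (1:ℝ)
              - ∑ ν ∈ G.level (G.lvl μ + 1), Finsupp.single ν (G.k μ ν)) := by
        rw [smul_sub, Finsupp.smul_single, smul_eq_mul, mul_one, Finset.smul_sum,
          mem_level.1 hμ]
        congr 1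
        exact Finset.sum_congr rfl fun ν _ => by
          rw [Finsupp.smul_single, smul_eq_mul]
      rw [h2]
      exact Submodule.smul_mem _ _ (gen_mem_relSub μ)
    have hsum : (∑ μ ∈ G.level N, Finsupp.single μ (G.dim x μ))
        - ∑ μ ∈ G.level N, ∑ ν ∈ G.level (N+1), Finsupp.single ν (G.dim x μ * G.k μ ν)
        ∈ G.relSub := by
      rw [← Finset.sum_sub_distrib]
      exact Submodule.sum_mem _ fun μ hμ => key μ hμ
    have heq : ∑ μ ∈ G.level N, ∑ ν ∈ G.level (N+1), Finsupp.single ν (G.dim x μ * G.k μ ν)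
        = ∑ ν ∈ G.level (N+1), Finsupp.single ν (G.dim x ν) := by
      rw [Finset.sum_comm]
      apply Finset.sum_congr rfl
      intro ν hν
      rw [← Finsupp.single_finset_sum, ← dim_last_sum hN (mem_level.1 hν)]
    rw [← heq]
    exact hsum

lemma toK0_Ef {N : ℕ} {c : G.V →₀ ℝ} (hc : ∀ x ∈ c.support, G.lvl x ≤ N) :
    G.toK0 (G.Ef N c) = G.toK0 c := by
  have hc' : c = ∑ x ∈ c.support, Finsupp.single x (c x) := (Finsupp.sum_single c).symm
  have hEf : G.Ef N c = ∑ x ∈ c.support, c x • ∑ μ ∈ G.level N, Finsupp.single μ (G.dim x μ) := by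
    rw [Ef]
    calc ∑ μ ∈ G.level N, Finsupp.single μ (G.Edim c μ)
        = ∑ μ ∈ G.level N, ∑ x ∈ c.support, Finsupp.single μ (c x * G.dim x μ) := by
          apply Finset.sum_congr rfl
          intro μ _
          rw [Edim_apply, Finsupp.single_finset_sum]
      _ = ∑ x ∈ c.support, ∑ μ ∈ G.level N, Finsupp.single μ (c x * G.dim x μ) :=
          Finset.sum_comm
      _ = ∑ x ∈ c.support, c x • ∑ μ ∈ G.level N, Finsupp.single μ (G.dim x μ) := by
          apply Finset.sum_congr rfl
          intro x _
          rw [Finset.smul_sum]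
          exact Finset.sum_congr rfl fun μ _ => by rw [Finsupp.smul_single, smul_eq_mul]
  rw [hEf, map_sum]
  have hstep : ∀ x ∈ c.support,
      G.toK0 (c x • ∑ μ ∈ G.level N, Finsupp.single μ (G.dim x μ))
        = G.toK0 (Finsupp.single x (c x)) := by
    intro x hx
    rw [map_smul, ← toK0_single_expand N (hc x hx), ← map_smul, Finsupp.smul_single,
      smul_eq_mul, mul_one]
  rw [Finset.sum_congr rfl hstep, ← map_sum, ← hc']

end

end GradedGraph
namespace GradedGraph

noncomputable section

variable {G : GradedGraph}

lemma evalC_eq_sum_over {φ : G.V → ℝ≥0∞} {c : G.V →₀ ℝ} {s : Finset G.V}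
    (hs : c.support ⊆ s) :
    G.evalC φ c = ∑ a ∈ s, ENNReal.ofReal (c a) * φ a := by
  rw [evalC]
  apply Finset.sum_subset hs
  intro x _ hx
  rw [Finsupp.notMem_support_iff.1 hx]
  simp

lemma evalC_single (φ : G.V → ℝ≥0∞) (a : G.V) :
    G.evalC φ (Finsupp.single a 1) = φ a := by
  rw [evalC, Finsupp.support_single_ne_zero a one_ne_zero, Finset.sum_singleton,
    Finsupp.single_eq_same]
  simp

lemma evalC_ne_top_of_mem {φ : G.V → ℝ≥0∞} {c : G.V →₀ ℝ} (h : G.evalC φ c ≠ ⊤)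
    {x : G.V} (hx : 0 < c x) : φ x ≠ ⊤ := by
  rw [evalC] at h
  intro htop
  apply h
  rw [ENNReal.sum_eq_top]
  refine ⟨x, Finsupp.mem_support_iff.2 (ne_of_gt hx), ?_⟩
  rw [htop, ENNReal.mul_top (by simp [ENNReal.ofReal_eq_zero]; linarith)]

lemma evalC_expand {φ : G.V → ℝ≥0∞} (h : G.Harmonic φ) {c : G.V →₀ ℝ}
    (hc : ∀ a, 0 ≤ c a) {N : ℕ} (hN : ∀ x ∈ c.support, G.lvl x ≤ N) :
    G.evalC φ c = ∑ μ ∈ G.level N, ENNReal.ofReal (G.Edim c μ) * φ μ := by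
  rw [evalC]
  calc ∑ x ∈ c.support, ENNReal.ofReal (c x) * φ x
      = ∑ x ∈ c.support, ∑ μ ∈ G.level N,
          ENNReal.ofReal (c x) * (ENNReal.ofReal (G.dim x μ) * φ μ) := by
        apply Finset.sum_congr rfl
        intro x hx
        rw [← Finset.mul_sum, ← harmonic_level_eq h x N (hN x hx)]
    _ = ∑ μ ∈ G.level N, ∑ x ∈ c.support,
          ENNReal.ofReal (c x) * (ENNReal.ofReal (G.dim x μ) * φ μ) := Finset.sum_comm
    _ = ∑ μ ∈ G.level N, ENNReal.ofReal (G.Edim c μ) * φ μ := by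
        apply Finset.sum_congr rfl
        intro μ _
        rw [Edim_apply, ENNReal.ofReal_sum_of_nonneg
          (fun x _ => mul_nonneg (hc x) (dim_nonneg x μ)), Finset.sum_mul]
        apply Finset.sum_congr rfl
        intro x _
        rw [ENNReal.ofReal_mul (hc x), mul_assoc]

lemma evalC_mono_of_leK {φ : G.V → ℝ≥0∞} (h : G.Harmonic φ) {d c : G.V →₀ ℝ}
    (hd : ∀ a, 0 ≤ d a) (hc : ∀ a, 0 ≤ c a)
    (hle : G.leK (G.toK0 d) (G.toK0 c)) : G.evalC φ d ≤ G.evalC φ c := by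
  obtain ⟨L, hL⟩ := Edim_mono_of_leK hle
  set N := max L ((c.support ∪ d.support).sup G.lvl) with hN
  have hNc : ∀ x ∈ c.support, G.lvl x ≤ N :=
    fun x hx => le_max_of_le_right (Finset.le_sup (Finset.mem_union_left _ hx))
  have hNd : ∀ x ∈ d.support, G.lvl x ≤ N :=
    fun x hx => le_max_of_le_right (Finset.le_sup (Finset.mem_union_right _ hx))
  rw [evalC_expand h hd hNd, evalC_expand h hc hNc]
  apply Finset.sum_le_sum
  intro μ hμ
  have : G.Edim d μ ≤ G.Edim c μ := hL μ (by rw [mem_level.1 hμ]; exact le_max_left _ _)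
  exact mul_le_mul_left (ENNReal.ofReal_le_ofReal this) _

lemma evalC_Ef {φ : G.V → ℝ≥0∞} (h : G.Harmonic φ) {c : G.V →₀ ℝ}
    (hc : ∀ a, 0 ≤ c a) {N : ℕ} (hN : ∀ x ∈ c.support, G.lvl x ≤ N) :
    G.evalC φ (G.Ef N c) = G.evalC φ c := by
  rw [evalC_eq_sum_over (Ef_support_subset N c), evalC_expand h hc hN]
  apply Finset.sum_congr rfl
  intro μ hμ
  rw [Ef_apply, if_pos (mem_level.1 hμ)]

end

end GradedGraph
namespace GradedGraph

noncomputable section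

variable {G : GradedGraph} {I : Set G.V}

lemma mem_of_k_ne_zero (hI : G.IsIdeal I) {a : G.V} (ha : a ∈ I) {b : G.V}
    (hk : G.k a b ≠ 0) : b ∈ I :=
  hI a ha b (Relation.ReflTransGen.single (lt_of_le_of_ne (G.k_nonneg a b) (Ne.symm hk)))

lemma mem_of_dim_ne_zero (hI : G.IsIdeal I) {a : G.V} (ha : a ∈ I) {b : G.V}
    (hd : G.dim a b ≠ 0) : b ∈ I :=
  hI a ha b (dim_ne_zero_le hd)

/-- The canonical embedding of the subtype `I`. -/
def embI (I : Set G.V) : ↥I ↪ G.V := ⟨Subtype.val, Subtype.val_injective⟩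

lemma level_restrict_map (hI : G.IsIdeal I) (N : ℕ) :
    ((G.restrict I hI).level N).map (embI I) = (G.level N).filter (fun v => v ∈ I) := by
  ext x
  rw [Finset.mem_map, Finset.mem_filter]
  constructor
  · rintro ⟨b, hb, rfl⟩
    exact ⟨mem_level.2 ((mem_level (G := G.restrict I hI)).1 hb), b.2⟩
  · rintro ⟨hx, hxI⟩
    exact ⟨⟨x, hxI⟩, (mem_level (G := G.restrict I hI)).2 ((mem_level (G := G)).1 hx), rfl⟩

lemma sum_level_restrict {M : Type*} [AddCommMonoid M] (hI : G.IsIdeal I) (N : ℕ)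
    (f : G.V → M) :
    ∑ μ ∈ (G.restrict I hI).level N, f μ.1
      = ∑ ν ∈ (G.level N).filter (fun v => v ∈ I), f ν := by
  rw [← level_restrict_map hI N, Finset.sum_map]
  rfl

lemma dimAux_restrict (hI : G.IsIdeal I) (n : ℕ) (a b : ↥I) :
    (G.restrict I hI).dimAux n a b = G.dimAux n a.1 b.1 := by
  induction n generalizing b with
  | zero =>
    simp only [dimAux]
    by_cases h : a = b
    · rw [if_pos h, if_pos (by rw [h])]
    · rw [if_neg h, if_neg (fun he => h (Subtype.ext he))]
  | succ n ih =>
    rw [dimAux_succ_sum, dimAux_succ_sum]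
    have h1 : ∑ c ∈ (G.restrict I hI).level ((G.restrict I hI).lvl a + n),
        (G.restrict I hI).dimAux n a c * (G.restrict I hI).k c b
        = ∑ c ∈ (G.restrict I hI).level (G.lvl a.1 + n), G.dimAux n a.1 c.1 * G.k c.1 b.1 := by
      apply Finset.sum_congr rfl
      intro c _
      rw [ih c]
    rw [h1, sum_level_restrict hI _ (fun ν => G.dimAux n a.1 ν * G.k ν b.1)]
    apply Finset.sum_filter_of_ne
    intro x _ hx
    have hd : G.dimAux n a.1 x ≠ 0 := fun h0 => hx (by rw [h0, zero_mul])
    exact hI a.1 a.2 x (dimAux_le hd)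

lemma dim_restrict (hI : G.IsIdeal I) (a b : ↥I) :
    (G.restrict I hI).dim a b = G.dim a.1 b.1 :=
  dimAux_restrict hI _ a b

/-- Generic conversion of the harmonicity finsum into a level sum. -/
lemma finsum_k_eq_sum (G' : GradedGraph) (φ : G'.V → ℝ≥0∞) (a : G'.V) :
    (∑ᶠ b, ENNReal.ofReal (G'.k a b) * φ b)
      = ∑ b ∈ G'.level (G'.lvl a + 1), ENNReal.ofReal (G'.k a b) * φ b := by
  apply finsum_eq_sum_of_support_subset
  intro b hb
  rw [Function.mem_support] at hb
  have : G'.k a b ≠ 0 := by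
    intro h0; rw [h0] at hb; simp at hb
  simp only [Finset.coe_sort_coe, Finset.mem_coe]
  exact mem_level.2 (G'.k_grade a b this)

lemma harmonic_restrict (hI : G.IsIdeal I) {φ : G.V → ℝ≥0∞} (h : G.Harmonic φ) :
    (G.restrict I hI).Harmonic (fun v => φ v.1) := by
  intro a
  show φ a.1 = _
  rw [finsum_k_eq_sum (G.restrict I hI) _ a]
  have h2 : ∑ b ∈ (G.restrict I hI).level ((G.restrict I hI).lvl a + 1),
      ENNReal.ofReal ((G.restrict I hI).k a b) * (fun v : ↥I => φ v.1) b
      = ∑ b ∈ (G.restrict I hI).level (G.lvl a.1 + 1),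
          (fun ν => ENNReal.ofReal (G.k a.1 ν) * φ ν) b.1 :=
    rfl
  rw [h2, sum_level_restrict hI _ (fun ν => ENNReal.ofReal (G.k a.1 ν) * φ ν)]
  rw [harmonic_sum_level h a.1]
  symm
  apply Finset.sum_filter_of_ne
  intro x _ hx
  have : G.k a.1 x ≠ 0 := by
    intro h0; rw [h0] at hx; simp at hx
  exact mem_of_k_ne_zero hI a.2 this

/-- Pushing a finitely supported function on `I` forward to `Γ`. -/
def pushI (I : Set G.V) (d : ↥I →₀ ℝ) : G.V →₀ ℝ := Finsupp.mapDomain Subtype.val d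

lemma pushI_apply_mem (d : ↥I →₀ ℝ) {x : G.V} (hx : x ∈ I) :
    pushI I d x = d ⟨x, hx⟩ :=
  Finsupp.mapDomain_apply Subtype.val_injective d ⟨x, hx⟩

lemma pushI_apply_not_mem (d : ↥I →₀ ℝ) {x : G.V} (hx : x ∉ I) : pushI I d x = 0 :=
  Finsupp.mapDomain_notin_range d x (by rwa [Subtype.range_coe])

lemma pushI_nonneg {d : ↥I →₀ ℝ} (hd : ∀ a, 0 ≤ d a) (x : G.V) : 0 ≤ pushI I d x := by
  by_cases hx : x ∈ I
  · rw [pushI_apply_mem d hx]; exact hd _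
  · rw [pushI_apply_not_mem d hx]

lemma pushI_support (d : ↥I →₀ ℝ) : (pushI I d).support = d.support.map (embI I) := by
  rw [Finset.map_eq_image]
  exact Finsupp.mapDomain_support_of_injective Subtype.val_injective d

lemma pushI_single (a : ↥I) (t : ℝ) : pushI I (Finsupp.single a t) = Finsupp.single a.1 t :=
  Finsupp.mapDomain_single

lemma pushI_eq_lmap (d : ↥I →₀ ℝ) :
    pushI I d = Finsupp.lmapDomain ℝ ℝ (Subtype.val : ↥I → G.V) d := rfl

lemma pushI_relSub (hI : G.IsIdeal I) {r : ↥I →₀ ℝ} (hr : r ∈ (G.restrict I hI).relSub) :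
    pushI I r ∈ G.relSub := by
  induction hr using Submodule.span_induction with
  | mem x hx =>
    obtain ⟨a, rfl⟩ := hx
    rw [pushI_eq_lmap, map_sub, ← pushI_eq_lmap, ← pushI_eq_lmap, pushI_single]
    rw [gen_finsum_eq (G := G.restrict I hI) a]
    have hl : (G.restrict I hI).lvl a = G.lvl a.1 := rfl
    rw [hl]
    have hps : pushI I (∑ b ∈ (G.restrict I hI).level (G.lvl a.1 + 1),
        Finsupp.single b ((G.restrict I hI).k a b))
        = ∑ b ∈ (G.restrict I hI).level (G.lvl a.1 + 1),
            (fun ν => Finsupp.single ν (G.k a.1 ν)) (b.1) := by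
      rw [pushI_eq_lmap, map_sum]
      exact Finset.sum_congr rfl fun b _ => Finsupp.mapDomain_single
    rw [hps, sum_level_restrict hI _ (fun ν => Finsupp.single ν (G.k a.1 ν))]
    have hfil : ∑ ν ∈ (G.level (G.lvl a.1 + 1)).filter (fun v => v ∈ I),
        Finsupp.single ν (G.k a.1 ν)
        = ∑ ν ∈ G.level (G.lvl a.1 + 1), Finsupp.single ν (G.k a.1 ν) := by
      apply Finset.sum_filter_of_ne
      intro x _ hx
      have : G.k a.1 x ≠ 0 := fun h0 => hx (by rw [h0, Finsupp.single_zero])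
      exact mem_of_k_ne_zero hI a.2 this
    rw [hfil]
    exact gen_mem_relSub a.1
  | zero =>
    rw [pushI_eq_lmap, map_zero]
    exact Submodule.zero_mem _
  | add x y hx hy ihx ihy =>
    rw [pushI_eq_lmap, map_add]
    exact Submodule.add_mem _ ihx ihy
  | smul t x hx ihx =>
    rw [pushI_eq_lmap, map_smul]
    exact Submodule.smul_mem _ _ ihx

lemma pushI_leK (hI : G.IsIdeal I) {d c : ↥I →₀ ℝ}
    (h : (G.restrict I hI).leK ((G.restrict I hI).toK0 d) ((G.restrict I hI).toK0 c)) :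
    G.leK (G.toK0 (pushI I d)) (G.toK0 (pushI I c)) := by
  rw [leK_iff] at h ⊢
  obtain ⟨p, hp, hmem⟩ := h
  let q : ↥I →₀ ℝ := p
  have hp' : ∀ a : ↥I, 0 ≤ q a := hp
  have hmem' : c - d - q ∈ (G.restrict I hI).relSub := hmem
  refine ⟨pushI I q, pushI_nonneg hp', ?_⟩
  have heq : pushI I c - pushI I d - pushI I q = pushI I (c - d - q) := by
    rw [pushI_eq_lmap, pushI_eq_lmap, pushI_eq_lmap, pushI_eq_lmap, map_sub, map_sub]
  rw [heq]
  exact pushI_relSub hI hmem'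

lemma evalC_pushI (hI : G.IsIdeal I) (φ : G.V → ℝ≥0∞) (d : ↥I →₀ ℝ) :
    G.evalC φ (pushI I d) = (G.restrict I hI).evalC (fun v => φ v.1) d := by
  rw [evalC, evalC, pushI_support, Finset.sum_map]
  apply Finset.sum_congr rfl
  intro b _
  have : pushI I d ((embI I) b) = d b := by
    rw [show (embI I) b = b.1 from rfl, pushI_apply_mem d b.2]
  rw [this]
  rfl

lemma Edim_pushI (hI : G.IsIdeal I) (d : ↥I →₀ ℝ) {μ : G.V} (hμ : μ ∈ I) :
    G.Edim (pushI I d) μ = (G.restrict I hI).Edim d ⟨μ, hμ⟩ := by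
  rw [Edim_apply, Edim_apply, pushI_support, Finset.sum_map]
  apply Finset.sum_congr rfl
  intro b _
  have h1 : pushI I d ((embI I) b) = d b := by
    rw [show (embI I) b = b.1 from rfl, pushI_apply_mem d b.2]
  rw [h1, show (embI I) b = b.1 from rfl, dim_restrict hI b ⟨μ, hμ⟩]

lemma Edim_pushI_not_mem (hI : G.IsIdeal I) (d : ↥I →₀ ℝ) {μ : G.V} (hμ : μ ∉ I) :
    G.Edim (pushI I d) μ = 0 := by
  apply Edim_eq_zero_of_not_le
  intro x hx hle
  rw [pushI_support, Finset.mem_map] at hx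
  obtain ⟨b, _, rfl⟩ := hx
  exact hμ (hI _ b.2 μ hle)

/-- Restriction of a finitely supported function to `I`. -/
def pullI (I : Set G.V) (c : G.V →₀ ℝ) : ↥I →₀ ℝ := Finsupp.subtypeDomain (· ∈ I) c

lemma pullI_apply (c : G.V →₀ ℝ) (b : ↥I) : pullI I c b = c b.1 := rfl

lemma pushI_pullI {c : G.V →₀ ℝ} (hc : ∀ x ∈ c.support, x ∈ I) :
    pushI I (pullI I c) = c := by
  ext x
  by_cases hx : x ∈ I
  · rw [pushI_apply_mem _ hx, pullI_apply]
  · rw [pushI_apply_not_mem _ hx]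
    by_contra h0
    exact hx (hc x (Finsupp.mem_support_iff.2 fun he => h0 he.symm))

lemma pullI_nonneg {c : G.V →₀ ℝ} (hc : ∀ a, 0 ≤ c a) (b : ↥I) : 0 ≤ pullI I c b := hc b.1

end

end GradedGraph
namespace GradedGraph

noncomputable section

variable {G : GradedGraph} {I : Set G.V}

/-- The partial extension sums `T_N`. -/
def Tlev (hI : G.IsIdeal I) (ψ : ↥I → ℝ≥0∞) (x : G.V) (N : ℕ) : ℝ≥0∞ :=
  ∑ μ ∈ (G.restrict I hI).level N, ENNReal.ofReal (G.dim x μ.1) * ψ μ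

/-- The extension of a harmonic function from the ideal to the whole graph. -/
def ExtF (hI : G.IsIdeal I) (ψ : ↥I → ℝ≥0∞) (x : G.V) : ℝ≥0∞ := ⨆ N, Tlev hI ψ x N

variable {hI : G.IsIdeal I}

lemma Tlev_zero_of_lt {ψ : ↥I → ℝ≥0∞} {x : G.V} {N : ℕ} (h : N < G.lvl x) :
    Tlev hI ψ x N = 0 := by
  apply Finset.sum_eq_zero
  intro μ hμ
  have hl : G.lvl μ.1 = N := (mem_level (G := G.restrict I hI)).1 hμ
  have : G.dim x μ.1 = 0 := by
    apply dim_eq_zero_of_le (by omega)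
    intro he
    rw [← he] at hl
    omega
  rw [this]
  simp

lemma Tlev_le_harmonic {ψ : ↥I → ℝ≥0∞} {φ : G.V → ℝ≥0∞} (hφ : G.Harmonic φ)
    (hle : ∀ μ : ↥I, ψ μ ≤ φ μ.1) (x : G.V) (N : ℕ) :
    Tlev hI ψ x N ≤ φ x := by
  rcases lt_or_ge N (G.lvl x) with h | h
  · rw [Tlev_zero_of_lt h]; exact zero_le
  · have h1 : Tlev hI ψ x N ≤ ∑ μ ∈ (G.restrict I hI).level N,
        ENNReal.ofReal (G.dim x μ.1) * φ μ.1 :=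
      Finset.sum_le_sum fun μ _ => mul_le_mul_right (hle μ) _
    have h2 : ∑ μ ∈ (G.restrict I hI).level N, ENNReal.ofReal (G.dim x μ.1) * φ μ.1
        = ∑ ν ∈ (G.level N).filter (fun v => v ∈ I), ENNReal.ofReal (G.dim x ν) * φ ν :=
      sum_level_restrict hI N (fun ν => ENNReal.ofReal (G.dim x ν) * φ ν)
    have h3 : ∑ ν ∈ (G.level N).filter (fun v => v ∈ I), ENNReal.ofReal (G.dim x ν) * φ ν
        ≤ ∑ ν ∈ G.level N, ENNReal.ofReal (G.dim x ν) * φ ν :=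
      Finset.sum_le_sum_of_subset (Finset.filter_subset _ _)
    rw [← harmonic_level_eq hφ x N h] at h3
    exact le_trans h1 (le_trans (le_of_eq h2) h3)

/-- Fubini-type identity governing monotonicity of the `T_N`. -/
lemma Tlev_succ_coef {ψ : ↥I → ℝ≥0∞} (hψ : (G.restrict I hI).Harmonic ψ)
    (x : G.V) (N : ℕ) :
    Tlev hI ψ x N = ∑ ν ∈ (G.restrict I hI).level (N+1),
      (∑ μ ∈ (G.restrict I hI).level N,
        ENNReal.ofReal (G.dim x μ.1) * ENNReal.ofReal (G.k μ.1 ν.1)) * ψ ν := by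
  rw [Tlev]
  have step : ∀ μ ∈ (G.restrict I hI).level N,
      ENNReal.ofReal (G.dim x μ.1) * ψ μ
      = ∑ ν ∈ (G.restrict I hI).level (N+1),
          ENNReal.ofReal (G.dim x μ.1) * (ENNReal.ofReal (G.k μ.1 ν.1) * ψ ν) := by
    intro μ hμ
    have h1 := harmonic_sum_level (G := G.restrict I hI) hψ μ
    rw [(mem_level (G := G.restrict I hI)).1 hμ] at h1
    rw [show ψ μ = ∑ ν ∈ (G.restrict I hI).level (N+1),
        ENNReal.ofReal (G.k μ.1 ν.1) * ψ ν from h1, Finset.mul_sum]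
  rw [Finset.sum_congr rfl step, Finset.sum_comm]
  apply Finset.sum_congr rfl
  intro ν _
  rw [Finset.sum_mul]
  exact Finset.sum_congr rfl fun μ _ => by ring

lemma coef_le {x : G.V} {N : ℕ} {ν : G.V} (hν : G.lvl ν = N + 1) :
    ∑ μ ∈ (G.restrict I hI).level N, G.dim x μ.1 * G.k μ.1 ν ≤ G.dim x ν := by
  rw [sum_level_restrict hI N (fun c => G.dim x c * G.k c ν)]
  rcases le_or_gt (G.lvl x) N with h | h
  · calc ∑ c ∈ (G.level N).filter (fun v => v ∈ I), G.dim x c * G.k c ν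
        ≤ ∑ c ∈ G.level N, G.dim x c * G.k c ν := by
          apply Finset.sum_le_sum_of_subset_of_nonneg (Finset.filter_subset _ _)
          intro c _ _
          exact mul_nonneg (dim_nonneg x c) (G.k_nonneg c ν)
      _ = G.dim x ν := (dim_last_sum h hν).symm
  · have h0 : ∀ c ∈ (G.level N).filter (fun v => v ∈ I), G.dim x c * G.k c ν = 0 := by
      intro c hc
      have hcl : G.lvl c = N := mem_level.1 (Finset.mem_of_mem_filter c hc)
      have : G.dim x c = 0 := by
        apply dim_eq_zero_of_le (by omega)
        intro he; rw [← he] at hcl; omega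
      rw [this, zero_mul]
    rw [Finset.sum_eq_zero h0]
    exact dim_nonneg x ν

lemma coef_eq {x : G.V} (hx : x ∈ I) {N : ℕ} (hxN : G.lvl x ≤ N) {ν : G.V}
    (hν : G.lvl ν = N + 1) :
    ∑ μ ∈ (G.restrict I hI).level N, G.dim x μ.1 * G.k μ.1 ν = G.dim x ν := by
  rw [sum_level_restrict hI N (fun c => G.dim x c * G.k c ν)]
  rw [dim_last_sum hxN hν]
  apply Finset.sum_filter_of_ne
  intro c _ hc
  have : G.dim x c ≠ 0 := fun h0 => hc (by rw [h0, zero_mul])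
  exact mem_of_dim_ne_zero hI hx this

lemma ofReal_coef (x : G.V) (N : ℕ) (ν : G.V) :
    ∑ μ ∈ (G.restrict I hI).level N,
        ENNReal.ofReal (G.dim x μ.1) * ENNReal.ofReal (G.k μ.1 ν)
      = ENNReal.ofReal (∑ μ ∈ (G.restrict I hI).level N, G.dim x μ.1 * G.k μ.1 ν) := by
  rw [ENNReal.ofReal_sum_of_nonneg
    (fun μ _ => mul_nonneg (dim_nonneg x μ.1) (G.k_nonneg μ.1 ν))]
  exact Finset.sum_congr rfl fun μ _ => (ENNReal.ofReal_mul (dim_nonneg x μ.1)).symm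

lemma Tlev_mono {ψ : ↥I → ℝ≥0∞} (hψ : (G.restrict I hI).Harmonic ψ) (x : G.V) :
    Monotone (Tlev hI ψ x) := by
  apply monotone_nat_of_le_succ
  intro N
  rw [Tlev_succ_coef hψ x N]
  apply Finset.sum_le_sum
  intro ν hν
  have hν1 : G.lvl ν.1 = N + 1 := (mem_level (G := G.restrict I hI)).1 hν
  apply mul_le_mul_left
  rw [ofReal_coef]
  exact ENNReal.ofReal_le_ofReal (coef_le hν1)

lemma Tlev_succ_of_mem {ψ : ↥I → ℝ≥0∞} (hψ : (G.restrict I hI).Harmonic ψ)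
    {x : G.V} (hx : x ∈ I) {N : ℕ} (hxN : G.lvl x ≤ N) :
    Tlev hI ψ x (N + 1) = Tlev hI ψ x N := by
  rw [Tlev_succ_coef hψ x N]
  apply Finset.sum_congr rfl
  intro ν hν
  have hν1 : G.lvl ν.1 = N + 1 := (mem_level (G := G.restrict I hI)).1 hν
  congr 1
  rw [ofReal_coef, coef_eq hx hxN hν1]

lemma Tlev_agree {ψ : ↥I → ℝ≥0∞} (hψ : (G.restrict I hI).Harmonic ψ)
    {x : G.V} (hx : x ∈ I) :
    ∀ N, G.lvl x ≤ N → Tlev hI ψ x N = ψ ⟨x, hx⟩ := by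
  refine Nat.le_induction ?_ ?_
  · rw [Tlev]
    refine (Finset.sum_eq_single_of_mem (⟨x, hx⟩ : ↥I)
      (show (⟨x, hx⟩ : ↥I) ∈ (G.restrict I hI).level (G.lvl x) from
        (mem_level (G := G.restrict I hI)).2 rfl) ?_).trans ?_
    · intro μ hμ hne
      have hl : G.lvl μ.1 = G.lvl x := (mem_level (G := G.restrict I hI)).1 hμ
      have : G.dim x μ.1 = 0 := by
        apply dim_eq_zero_of_le (le_of_eq hl)
        intro he
        exact hne (Subtype.ext he.symm)
      rw [this]
      simp
    · rw [show (⟨x, hx⟩ : ↥I).1 = x from rfl, dim_self]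
      simp
  · intro N hN IH
    rw [Tlev_succ_of_mem hψ hx hN, IH]

lemma ExtF_agree {ψ : ↥I → ℝ≥0∞} (hψ : (G.restrict I hI).Harmonic ψ)
    {x : G.V} (hx : x ∈ I) : ExtF hI ψ x = ψ ⟨x, hx⟩ := by
  apply le_antisymm
  · apply iSup_le
    intro N
    rcases lt_or_ge N (G.lvl x) with h | h
    · rw [Tlev_zero_of_lt h]; exact zero_le
    · rw [Tlev_agree hψ hx N h]
  · exact le_iSup_of_le (G.lvl x) (le_of_eq (Tlev_agree hψ hx _ le_rfl).symm)

lemma ExtF_le_harmonic {ψ : ↥I → ℝ≥0∞} {φ : G.V → ℝ≥0∞} (hφ : G.Harmonic φ)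
    (hle : ∀ μ : ↥I, ψ μ ≤ φ μ.1) (x : G.V) : ExtF hI ψ x ≤ φ x :=
  iSup_le fun N => Tlev_le_harmonic hφ hle x N

lemma iSup_eq_of_eventually {f g : ℕ → ℝ≥0∞} (hf : Monotone f) (hg : Monotone g)
    {N₀ : ℕ} (h : ∀ N, N₀ ≤ N → f N = g N) : (⨆ N, f N) = ⨆ N, g N := by
  apply le_antisymm
  · apply iSup_le
    intro N
    calc f N ≤ f (max N N₀) := hf (le_max_left _ _)
      _ = g (max N N₀) := h _ (le_max_right _ _)
      _ ≤ ⨆ N, g N := le_iSup _ _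
  · apply iSup_le
    intro N
    calc g N ≤ g (max N N₀) := hg (le_max_left _ _)
      _ = f (max N N₀) := (h _ (le_max_right _ _)).symm
      _ ≤ ⨆ N, f N := le_iSup _ _

lemma ExtF_harmonic {ψ : ↥I → ℝ≥0∞} (hψ : (G.restrict I hI).Harmonic ψ) :
    G.Harmonic (ExtF hI ψ) := by
  intro x
  rw [finsum_k_eq_sum G (ExtF hI ψ) x]
  have h1 : ∀ b ∈ G.level (G.lvl x + 1),
      ENNReal.ofReal (G.k x b) * ExtF hI ψ b = ⨆ N, ENNReal.ofReal (G.k x b) * Tlev hI ψ b N :=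
    fun b _ => by simp only [ExtF]; rw [ENNReal.mul_iSup]
  have h2 := ENNReal.finsetSum_iSup_of_monotone (s := G.level (G.lvl x + 1))
    (f := fun b N => ENNReal.ofReal (G.k x b) * Tlev hI ψ b N)
    (fun b N M hNM => mul_le_mul_right (Tlev_mono hψ b hNM) _)
  rw [Finset.sum_congr rfl h1, h2]
  have key : ∀ N, G.lvl x + 1 ≤ N →
      (∑ b ∈ G.level (G.lvl x + 1), ENNReal.ofReal (G.k x b) * Tlev hI ψ b N)
        = Tlev hI ψ x N := by
    intro N hN
    have expand : ∀ b ∈ G.level (G.lvl x + 1),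
        ENNReal.ofReal (G.k x b) * Tlev hI ψ b N
        = ∑ μ ∈ (G.restrict I hI).level N,
            ENNReal.ofReal (G.k x b) * (ENNReal.ofReal (G.dim b μ.1) * ψ μ) := by
      intro b _
      rw [Tlev, Finset.mul_sum]
    rw [Finset.sum_congr rfl expand, Finset.sum_comm]
    apply Finset.sum_congr rfl
    intro μ hμ
    have hμ1 : G.lvl μ.1 = N := (mem_level (G := G.restrict I hI)).1 hμ
    have hlt : G.lvl x < G.lvl μ.1 := by omega
    rw [Finset.sum_congr rfl
      (fun b _ => (mul_assoc (ENNReal.ofReal (G.k x b)) (ENNReal.ofReal (G.dim b μ.1)) (ψ μ)).symm),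
      ← Finset.sum_mul]
    congr 1
    rw [ofReal_dim_first hlt]
  simp only [ExtF]
  exact iSup_eq_of_eventually (Tlev_mono hψ x)
    (fun N M hNM => Finset.sum_le_sum fun b _ => mul_le_mul_right (Tlev_mono hψ b hNM) _)
    (fun N hN => (key N hN).symm)

end

end GradedGraph
namespace GradedGraph

noncomputable section

variable {G : GradedGraph} {I : Set G.V} {hI : G.IsIdeal I}

lemma harmonic_split {φ : G.V → ℝ≥0∞} (hφ : G.Harmonic φ) (a : G.V) {N : ℕ}
    (hN : G.lvl a ≤ N) :
    φ a = Tlev hI (fun μ => φ μ.1) a N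
      + ∑ ν ∈ (G.level N).filter (fun v => ¬ v ∈ I), ENNReal.ofReal (G.dim a ν) * φ ν := by
  rw [harmonic_level_eq hφ a N hN, Tlev,
    sum_level_restrict hI N (fun ν => ENNReal.ofReal (G.dim a ν) * φ ν)]
  exact (Finset.sum_filter_add_sum_filter_not _ _ _).symm

lemma Tlev_congr {ψ ψ' : ↥I → ℝ≥0∞} (h : ∀ μ, ψ μ = ψ' μ) (a : G.V) (N : ℕ) :
    Tlev hI ψ a N = Tlev hI ψ' a N :=
  Finset.sum_congr rfl fun μ _ => by rw [h μ]

/-- Any harmonic function dominated by an extension is recovered from its restriction. -/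
lemma sup_Tlev_of_dominated {ψ : ↥I → ℝ≥0∞} (hψ : (G.restrict I hI).Harmonic ψ)
    {χ : G.V → ℝ≥0∞} (hχ : G.Harmonic χ) (hle : ∀ v, χ v ≤ ExtF hI ψ v) {a : G.V}
    (ha : ExtF hI ψ a ≠ ⊤) :
    χ a = ⨆ N, Tlev hI (fun μ => χ μ.1) a N := by
  have hχI : (G.restrict I hI).Harmonic (fun v : ↥I => χ v.1) := harmonic_restrict hI hχ
  apply le_antisymm
  · -- χ a ≤ ⨆ N, Tχ a N
    apply ENNReal.le_of_forall_pos_le_add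
    intro ε hε hS
    set S := ⨆ N, Tlev hI (fun μ => χ μ.1) a N with hSdef
    set E := ExtF hI ψ a with hEdef
    -- decomposition of E at each level
    have hdec : ∀ N, G.lvl a ≤ N → E = Tlev hI ψ a N
        + ∑ ν ∈ (G.level N).filter (fun v => ¬ v ∈ I),
            ENNReal.ofReal (G.dim a ν) * ExtF hI ψ ν := by
      intro N hN
      have h1 := harmonic_split (hI := hI) (ExtF_harmonic hψ) a hN
      rw [Tlev_congr (fun μ => by
        rw [show ExtF hI ψ μ.1 = ψ ⟨μ.1, μ.2⟩ from ExtF_agree hψ μ.2, Subtype.coe_eta]) a N] at h1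
      exact h1
    -- find a good N
    have hgood : ∃ N, G.lvl a ≤ N ∧ E ≤ Tlev hI ψ a N + ε := by
      rcases le_total E (ε : ℝ≥0∞) with hEe | hEe
      · exact ⟨G.lvl a, le_rfl, le_add_left hEe⟩
      · have hE0 : E ≠ 0 := by
          intro h0
          rw [h0] at hEe
          exact absurd (le_antisymm hEe (zero_le)) (by simpa using (ENNReal.coe_pos.2 hε).ne')
        have hlt : E - ε < E := ENNReal.sub_lt_self ha hE0 (by simpa using (ENNReal.coe_pos.2 hε).ne')
        rw [hEdef, ExtF] at hlt
        rw [lt_iSup_iff] at hlt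
        obtain ⟨N₁, hN₁⟩ := hlt
        refine ⟨max N₁ (G.lvl a), le_max_right _ _, ?_⟩
        have : E - ε ≤ Tlev hI ψ a (max N₁ (G.lvl a)) :=
          le_trans (le_of_lt hN₁) (Tlev_mono hψ a (le_max_left _ _))
        exact tsub_le_iff_right.1 this
    obtain ⟨N, hNa, hNe⟩ := hgood
    -- tail of E is at most ε
    have htail : ∑ ν ∈ (G.level N).filter (fun v => ¬ v ∈ I),
        ENNReal.ofReal (G.dim a ν) * ExtF hI ψ ν ≤ ε := by
      have hTne : Tlev hI ψ a N ≠ ⊤ := by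
        intro h0
        apply ha
        rw [hEdef, ExtF]
        exact top_le_iff.1 (h0 ▸ le_iSup (Tlev hI ψ a) N)
      have := hdec N hNa
      rw [this] at hNe
      exact (ENNReal.add_le_add_iff_left hTne).1 hNe
    -- conclude
    have hsplit := harmonic_split (hI := hI) hχ a hNa
    have htail2 : ∑ ν ∈ (G.level N).filter (fun v => ¬ v ∈ I),
        ENNReal.ofReal (G.dim a ν) * χ ν ≤ ε :=
      le_trans (Finset.sum_le_sum fun ν _ => mul_le_mul_right (hle ν) _) htail
    calc χ a = Tlev hI (fun μ => χ μ.1) a N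
        + ∑ ν ∈ (G.level N).filter (fun v => ¬ v ∈ I), ENNReal.ofReal (G.dim a ν) * χ ν :=
          hsplit
      _ ≤ S + ε := add_le_add (le_iSup (Tlev hI (fun μ => χ μ.1) a) N) htail2
  · exact iSup_le fun N => Tlev_le_harmonic hχ (fun μ => le_rfl) a N

/-- The sequence computing `evalC` of an extension. -/
def Bseq (hI : G.IsIdeal I) (ψ : ↥I → ℝ≥0∞) (c : G.V →₀ ℝ) (N : ℕ) : ℝ≥0∞ :=
  ∑ x ∈ c.support, ENNReal.ofReal (c x) * Tlev hI ψ x N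

lemma Bseq_mono {ψ : ↥I → ℝ≥0∞} (hψ : (G.restrict I hI).Harmonic ψ) (c : G.V →₀ ℝ) :
    Monotone (Bseq hI ψ c) :=
  fun N M h => Finset.sum_le_sum fun x _ => mul_le_mul_right (Tlev_mono hψ x h) _

lemma evalC_ExtF_eq_iSup {ψ : ↥I → ℝ≥0∞} (hψ : (G.restrict I hI).Harmonic ψ)
    (c : G.V →₀ ℝ) : G.evalC (ExtF hI ψ) c = ⨆ N, Bseq hI ψ c N := by
  rw [evalC]
  have h1 : ∀ x ∈ c.support, ENNReal.ofReal (c x) * ExtF hI ψ x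
      = ⨆ N, ENNReal.ofReal (c x) * Tlev hI ψ x N :=
    fun x _ => by simp only [ExtF]; rw [ENNReal.mul_iSup]
  rw [Finset.sum_congr rfl h1]
  exact ENNReal.finsetSum_iSup_of_monotone
    (fun x N M h => mul_le_mul_right (Tlev_mono hψ x h) _)

lemma Bseq_eq_evalR {ψ : ↥I → ℝ≥0∞} (c : G.V →₀ ℝ) (hc : ∀ a, 0 ≤ c a) (N : ℕ) :
    Bseq hI ψ c N = (G.restrict I hI).evalC ψ (pullI I (G.Ef N c)) := by
  have hstep1 : Bseq hI ψ c N
      = ∑ μ ∈ (G.restrict I hI).level N, ENNReal.ofReal (G.Edim c μ.1) * ψ μ := by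
    rw [Bseq]
    have h1 : ∀ x ∈ c.support, ENNReal.ofReal (c x) * Tlev hI ψ x N
        = ∑ μ ∈ (G.restrict I hI).level N,
            ENNReal.ofReal (c x) * (ENNReal.ofReal (G.dim x μ.1) * ψ μ) :=
      fun x _ => by rw [Tlev, Finset.mul_sum]
    rw [Finset.sum_congr rfl h1, Finset.sum_comm]
    apply Finset.sum_congr rfl
    intro μ _
    rw [Finset.sum_congr rfl (fun x _ =>
      (mul_assoc (ENNReal.ofReal (c x)) (ENNReal.ofReal (G.dim x μ.1)) (ψ μ)).symm),
      ← Finset.sum_mul]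
    congr 1
    rw [Edim_apply, ENNReal.ofReal_sum_of_nonneg
      (fun x _ => mul_nonneg (hc x) (dim_nonneg x μ.1))]
    exact Finset.sum_congr rfl fun x _ => (ENNReal.ofReal_mul (hc x)).symm
  rw [hstep1]
  have hsupp : (pullI I (G.Ef N c)).support ⊆ (G.restrict I hI).level N := by
    intro b hb
    rw [Finsupp.mem_support_iff] at hb
    rw [pullI_apply, Ef_apply] at hb
    by_cases h2 : G.lvl b.1 = N
    · exact (mem_level (G := G.restrict I hI)).2 h2
    · rw [if_neg h2] at hb
      exact absurd rfl hb
  rw [evalC_eq_sum_over (G := G.restrict I hI) hsupp]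
  apply Finset.sum_congr rfl
  intro μ hμ
  have hp : (pullI I (G.Ef N c)) μ = (G.Ef N c) μ.1 := pullI_apply _ μ
  congr 1
  exact (congrArg ENNReal.ofReal
    (hp.trans (by rw [Ef_apply,
      if_pos (show G.lvl μ.1 = N from (mem_level (G := G.restrict I hI)).1 hμ)]))).symm

lemma pushI_pullI_Ef_le {c : G.V →₀ ℝ} (hc : ∀ a, 0 ≤ c a) (N : ℕ) (x : G.V) :
    pushI I (pullI I (G.Ef N c)) x ≤ (G.Ef N c) x := by
  by_cases hx : x ∈ I
  · rw [pushI_apply_mem _ hx, pullI_apply]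
  · rw [pushI_apply_not_mem _ hx]
    exact Ef_nonneg hc x

lemma leK_pullI_Ef (hI : G.IsIdeal I) {c : G.V →₀ ℝ} (hc : ∀ a, 0 ≤ c a) {N : ℕ}
    (hN : ∀ x ∈ c.support, G.lvl x ≤ N) :
    G.leK (G.toK0 (pushI I (pullI I (G.Ef N c)))) (G.toK0 c) := by
  have h1 := leK_of_le (G := G) (d := pushI I (pullI I (G.Ef N c))) (c := G.Ef N c)
    (pushI_pullI_Ef_le (I := I) hc N)
  rwa [toK0_Ef hN] at h1

end

end GradedGraph
namespace GradedGraph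

noncomputable section

variable {G : GradedGraph} {I : Set G.V} {hI : G.IsIdeal I}

lemma harm_of_fos {φ : G.V → ℝ≥0∞} (h : G.FinOrSemifinite φ) : G.Harmonic φ := by
  rcases h with h | h
  · exact h.1
  · exact h.1

lemma semifinite_of_fos_top {φ : G.V → ℝ≥0∞} (h : G.FinOrSemifinite φ) {a : G.V}
    (ha : φ a = ⊤) : G.Semifinite φ := by
  rcases h with h | h
  · exact absurd ha (h.2 a)
  · exact h

lemma evalC_congr_support {φ φ' : G.V → ℝ≥0∞} {c : G.V →₀ ℝ}
    (h : ∀ x ∈ c.support, φ x = φ' x) : G.evalC φ c = G.evalC φ' c :=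
  Finset.sum_congr rfl fun x hx => by rw [h x hx]

lemma evalC_ne_top_of_forall {φ : G.V → ℝ≥0∞} (h : ∀ a, φ a ≠ ⊤) (c : G.V →₀ ℝ) :
    G.evalC φ c ≠ ⊤ := by
  rw [evalC]
  intro htop
  rw [ENNReal.sum_eq_top] at htop
  obtain ⟨x, _, hx⟩ := htop
  exact (ENNReal.mul_ne_top ENNReal.ofReal_ne_top (h x)) hx

/-- `Ext` preserves finiteness or semifiniteness. -/
lemma extend_fos {ψ : ↥I → ℝ≥0∞} (hψ : (G.restrict I hI).FinOrSemifinite ψ) :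
    G.FinOrSemifinite (ExtF hI ψ) := by
  have hψH : (G.restrict I hI).Harmonic ψ := harm_of_fos hψ
  have hEH : G.Harmonic (ExtF hI ψ) := ExtF_harmonic hψH
  by_cases htop : ∀ a, ExtF hI ψ a ≠ ⊤
  · exact Or.inl ⟨hEH, htop⟩
  · push_neg at htop
    obtain ⟨a₀, ha₀⟩ := htop
    refine Or.inr ⟨hEH, ⟨a₀, ha₀⟩, ?_⟩
    intro c hc
    apply le_antisymm
    · -- ≤ : approximate from inside the ideal
      rw [evalC_ExtF_eq_iSup hψH c]
      apply iSup_le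
      intro N
      set N' := max N (c.support.sup G.lvl) with hN'
      have hNle : ∀ x ∈ c.support, G.lvl x ≤ N' :=
        fun x hx => le_trans (Finset.le_sup hx) (le_max_right _ _)
      have hmono : Bseq hI ψ c N ≤ Bseq hI ψ c N' := Bseq_mono hψH c (le_max_left _ _)
      refine le_trans hmono ?_
      set w := pullI I (G.Ef N' c) with hw
      have hwnn : ∀ b, 0 ≤ w b := fun b => by
        rw [hw, pullI_apply]
        exact Ef_nonneg hc b.1
      have hBw : Bseq hI ψ c N' = (G.restrict I hI).evalC ψ w := Bseq_eq_evalR c hc N'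
      have hleKw : G.leK (G.toK0 (pushI I w)) (G.toK0 c) := leK_pullI_Ef hI hc hNle
      have hEval : G.evalC (ExtF hI ψ) (pushI I w) = (G.restrict I hI).evalC ψ w := by
        rw [evalC_pushI hI]
        apply evalC_congr_support
        intro v _
        rw [show ExtF hI ψ v.1 = ψ ⟨v.1, v.2⟩ from ExtF_agree hψH v.2, Subtype.coe_eta]
      by_cases hBfin : (G.restrict I hI).evalC ψ w ≠ ⊤
      · rw [hBw]
        exact le_iSup_of_le ⟨pushI I w, pushI_nonneg hwnn, hleKw, by rw [hEval]; exact hBfin⟩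
          (le_of_eq hEval.symm)
      · push_neg at hBfin
        -- the ideal value is infinite: use semifiniteness of ψ on the ideal
        have hψS : (G.restrict I hI).Semifinite ψ := by
          rcases hψ with hfin | hsem
          · exact absurd (evalC_ne_top_of_forall hfin.2 w) (by rw [hBfin]; simp)
          · exact hsem
        have hsup := hψS.2.2 w hwnn
        rw [hBfin] at hsup
        have htop2 : (⨆ d : {d : ↥I →₀ ℝ // (∀ a, 0 ≤ d a)
            ∧ (G.restrict I hI).leK ((G.restrict I hI).toK0 d) ((G.restrict I hI).toK0 w)
            ∧ (G.restrict I hI).evalC ψ d ≠ ⊤},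
              (G.restrict I hI).evalC ψ d.1) = ⊤ := hsup.symm
        rw [hBw, hBfin]
        refine le_trans (le_of_eq htop2.symm) (iSup_le ?_)
        rintro ⟨d, hdnn, hdleK, hdfin⟩
        have hEd : G.evalC (ExtF hI ψ) (pushI I d) = (G.restrict I hI).evalC ψ d := by
          rw [evalC_pushI hI]
          apply evalC_congr_support
          intro v _
          rw [show ExtF hI ψ v.1 = ψ ⟨v.1, v.2⟩ from ExtF_agree hψH v.2, Subtype.coe_eta]
        refine le_iSup_of_le ⟨pushI I d, pushI_nonneg hdnn,
          leK_trans (pushI_leK hI hdleK) hleKw, by rw [hEd]; exact hdfin⟩ (le_of_eq hEd.symm)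
    · -- ≥ : values below `c` in the cone are dominated
      apply iSup_le
      rintro ⟨d, hdnn, hdleK, hdfin⟩
      exact evalC_mono_of_leK hEH hdnn hc hdleK

/-- Restriction to an ideal preserves finiteness or semifiniteness. -/
lemma restrict_fos {φ : G.V → ℝ≥0∞} (hφ : G.FinOrSemifinite φ) :
    (G.restrict I hI).FinOrSemifinite (fun v : ↥I => φ v.1) := by
  have hφH : G.Harmonic φ := harm_of_fos hφ
  have hRH : (G.restrict I hI).Harmonic (fun v : ↥I => φ v.1) := harmonic_restrict hI hφH
  by_cases hfin : ∀ v : ↥I, φ v.1 ≠ ⊤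
  · exact Or.inl ⟨hRH, hfin⟩
  · push_neg at hfin
    obtain ⟨μ₀, hμ₀⟩ := hfin
    have hφS : G.Semifinite φ := semifinite_of_fos_top hφ hμ₀
    refine Or.inr ⟨hRH, ⟨μ₀, hμ₀⟩, ?_⟩
    intro c hc
    apply le_antisymm
    · -- ≤
      have h1 : (G.restrict I hI).evalC (fun v : ↥I => φ v.1) c = G.evalC φ (pushI I c) :=
        (evalC_pushI hI φ c).symm
      rw [h1, hφS.2.2 (pushI I c) (pushI_nonneg hc)]
      apply iSup_le
      rintro ⟨d, hdnn, hdleK, hdfin⟩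
      -- project d into the ideal
      obtain ⟨L, hL⟩ := Edim_mono_of_leK hdleK
      set M := max L (max (d.support.sup G.lvl) (c.support.sup (fun b => G.lvl b.1))) with hM
      have hMd : ∀ x ∈ d.support, G.lvl x ≤ M := fun x hx =>
        le_trans (Finset.le_sup hx)
          (le_trans (le_max_left (d.support.sup G.lvl) (c.support.sup (fun b => G.lvl b.1)))
            (le_max_right L _))
      have hMc : ∀ b ∈ c.support, G.lvl b.1 ≤ M := fun b hb =>
        le_trans (Finset.le_sup (f := fun b : ↥I => G.lvl b.1) hb)
          (le_trans (le_max_right (d.support.sup G.lvl) (c.support.sup (fun b => G.lvl b.1)))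
            (le_max_right L _))
      have hML : L ≤ M := le_max_left _ _
      -- the level-M expansion of d is supported in I
      have hsuppI : ∀ x ∈ (G.Ef M d).support, x ∈ I := by
        intro x hx
        have hxl : G.lvl x = M := mem_level.1 (Ef_support_subset M d hx)
        rw [Finsupp.mem_support_iff, Ef_apply, if_pos hxl] at hx
        by_contra hxI
        apply hx
        apply le_antisymm
        · rw [← Edim_pushI_not_mem hI c hxI]
          exact hL x (by omega)
        · exact Edim_nonneg hdnn x
      set u := pullI I (G.Ef M d) with hu
      have hpu : pushI I u = G.Ef M d := pushI_pullI hsuppI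
      have hunn : ∀ b, 0 ≤ u b := fun b => by
        rw [hu, pullI_apply]
        exact Ef_nonneg hdnn b.1
      have hud : (G.restrict I hI).evalC (fun v : ↥I => φ v.1) u = G.evalC φ d := by
        have h6 := evalC_pushI hI φ u
        rw [hpu, evalC_Ef hφH hdnn hMd] at h6
        exact h6.symm
      -- u is below c in the K₀ of the ideal
      have huleK : (G.restrict I hI).leK ((G.restrict I hI).toK0 u)
          ((G.restrict I hI).toK0 c) := by
        have hptw : ∀ b : ↥I, u b ≤ ((G.restrict I hI).Ef M c) b := by
          intro b
          have h2 : ((G.restrict I hI).Ef M c) b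
              = if (G.restrict I hI).lvl b = M then (G.restrict I hI).Edim c b else 0 :=
            Ef_apply (G := G.restrict I hI) M c b
          have h3 : u b = if G.lvl b.1 = M then G.Edim d b.1 else 0 := by
            rw [hu, pullI_apply, Ef_apply]
          rw [h2, h3]
          by_cases hb : G.lvl b.1 = M
          · rw [if_pos hb, if_pos (show (G.restrict I hI).lvl b = M from hb)]
            have h4 : G.Edim d b.1 ≤ G.Edim (pushI I c) b.1 := hL b.1 (by omega)
            rwa [Edim_pushI hI c b.2, Subtype.coe_eta] at h4
          · rw [if_neg hb, if_neg (show ¬ (G.restrict I hI).lvl b = M from hb)]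
        have h5 := leK_of_le (G := G.restrict I hI) hptw
        rwa [toK0_Ef (G := G.restrict I hI) hMc] at h5
      exact le_iSup_of_le ⟨u, hunn, huleK, by rw [hud]; exact hdfin⟩ (le_of_eq hud.symm)
    · -- ≥
      apply iSup_le
      rintro ⟨d, hdnn, hdleK, hdfin⟩
      exact evalC_mono_of_leK hRH hdnn hc hdleK

end

end GradedGraph
namespace GradedGraph

noncomputable section

variable {G : GradedGraph} {I : Set G.V}

lemma single_one_nonneg (a : G.V) : ∀ x, 0 ≤ (Finsupp.single a (1:ℝ)) x := by
  intro x
  rw [Finsupp.single_apply]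
  by_cases h : a = x
  · rw [if_pos h]; norm_num
  · rw [if_neg h]

/-- If an indecomposable function does not vanish on the ideal, it has a finite nonzero
value on the ideal. -/
lemma exists_finite_nonzero (hI : G.IsIdeal I) {φ : G.V → ℝ≥0∞}
    (hφ : G.FinOrSemifinite φ) {μ : G.V} (hμ : μ ∈ I) (h0 : φ μ ≠ 0) :
    ∃ a ∈ I, φ a ≠ 0 ∧ φ a ≠ ⊤ := by
  by_cases hμt : φ μ = ⊤
  · have hφS := semifinite_of_fos_top hφ hμt
    have hs := hφS.2.2 (Finsupp.single μ 1) (single_one_nonneg μ)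
    rw [evalC_single, hμt] at hs
    have hpos : (0:ℝ≥0∞) < ⨆ d : {d : G.V →₀ ℝ // (∀ a, 0 ≤ d a)
        ∧ G.leK (G.toK0 d) (G.toK0 (Finsupp.single μ 1)) ∧ G.evalC φ d ≠ ⊤},
        G.evalC φ d.1 := by
      rw [← hs]
      exact lt_of_le_of_ne (zero_le) (Ne.symm (by simp))
    rw [lt_iSup_iff] at hpos
    obtain ⟨⟨d, hdnn, hdleK, hdfin⟩, hdpos⟩ := hpos
    obtain ⟨L, hL⟩ := Edim_mono_of_leK hdleK
    set N := max L (d.support.sup G.lvl) with hN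
    have hNd : ∀ x ∈ d.support, G.lvl x ≤ N :=
      fun x hx => le_trans (Finset.le_sup hx) (le_max_right _ _)
    have hexp : G.evalC φ d = ∑ ν ∈ G.level N, ENNReal.ofReal (G.Edim d ν) * φ ν :=
      evalC_expand (harm_of_fos hφ) hdnn hNd
    rw [hexp] at hdpos hdfin
    obtain ⟨ν, hνmem, hνne⟩ := Finset.exists_ne_zero_of_sum_ne_zero hdpos.ne'
    obtain ⟨hE0, hφν0⟩ := mul_ne_zero_iff.1 hνne
    have hνtop : φ ν ≠ ⊤ := by
      intro ht
      exact hdfin (ENNReal.sum_eq_top.2 ⟨ν, hνmem, by rw [ht, ENNReal.mul_top hE0]⟩)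
    have hEpos : 0 < G.Edim d ν := by
      rcases lt_or_ge 0 (G.Edim d ν) with h | h
      · exact h
      · exact absurd (ENNReal.ofReal_eq_zero.2 h) hE0
    have hdim : G.dim μ ν ≠ 0 := by
      have h1 : G.Edim d ν ≤ G.Edim (Finsupp.single μ 1) ν :=
        hL ν (by rw [mem_level.1 hνmem]; exact le_max_left _ _)
      rw [Edim_single, one_mul] at h1
      intro h2
      rw [h2] at h1
      linarith
    exact ⟨ν, mem_of_dim_ne_zero hI hμ hdim, hφν0, hνtop⟩
  · exact ⟨μ, hμ, h0, hμt⟩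

variable {hI : G.IsIdeal I}

/-- `Ext ∘ restrict = id` on indecomposable functions not vanishing on the ideal. -/
lemma ext_restrict_eq (hφ : G.Indecomposable φ) (hne : ∃ μ ∈ I, φ μ ≠ 0) :
    ∀ a, ExtF hI (fun v : ↥I => φ v.1) a = φ a := by
  obtain ⟨μ, hμI, hμ0⟩ := hne
  have hH : G.Harmonic φ := harm_of_fos hφ.1
  have hψH : (G.restrict I hI).Harmonic (fun v : ↥I => φ v.1) := harmonic_restrict hI hH
  have hExt_le : ∀ x, ExtF hI (fun v : ↥I => φ v.1) x ≤ φ x :=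
    ExtF_le_harmonic hH (fun _ => le_rfl)
  obtain ⟨a₀, ha₀I, ha₀0, ha₀t⟩ := exists_finite_nonzero hI hφ.1 hμI hμ0
  have hagree : ExtF hI (fun v : ↥I => φ v.1) a₀ = φ a₀ := ExtF_agree hψH ha₀I
  have hEfos : G.FinOrSemifinite (ExtF hI (fun v : ↥I => φ v.1)) :=
    extend_fos (restrict_fos hφ.1)
  obtain ⟨C, hC⟩ := hφ.2.2 (ExtF hI (fun v : ↥I => φ v.1)) hEfos hExt_le
    ⟨a₀, ha₀t, by rw [hagree]; exact ha₀0⟩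
  have hC1 : C = 1 := by
    calc C = C * (φ a₀ * (φ a₀)⁻¹) := by rw [ENNReal.mul_inv_cancel ha₀0 ha₀t, mul_one]
      _ = (C * φ a₀) * (φ a₀)⁻¹ := (mul_assoc _ _ _).symm
      _ = φ a₀ * (φ a₀)⁻¹ := by rw [← hC a₀ ha₀t, hagree]
      _ = 1 := ENNReal.mul_inv_cancel ha₀0 ha₀t
  intro a
  by_cases hat : φ a = ⊤
  · -- show the extension is also infinite there
    refine le_antisymm (by rw [hat]; exact le_top) ?_
    have hφS := semifinite_of_fos_top hφ.1 hat
    have hs := hφS.2.2 (Finsupp.single a 1) (single_one_nonneg a)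
    rw [evalC_single] at hs
    rw [hat] at hs
    calc φ a = (⊤:ℝ≥0∞) := hat
      _ = ⨆ d : {d : G.V →₀ ℝ // (∀ x, 0 ≤ d x)
          ∧ G.leK (G.toK0 d) (G.toK0 (Finsupp.single a 1)) ∧ G.evalC φ d ≠ ⊤},
            G.evalC φ d.1 := hs
      _ ≤ ExtF hI (fun v : ↥I => φ v.1) a := by
          apply iSup_le
          rintro ⟨d, hdnn, hdleK, hdfin⟩
          have heq : G.evalC φ d = G.evalC (ExtF hI (fun v : ↥I => φ v.1)) d := by
            apply evalC_congr_support
            intro x hx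
            have hxpos : 0 < d x :=
              lt_of_le_of_ne (hdnn x) (Ne.symm (Finsupp.mem_support_iff.1 hx))
            have hxt : φ x ≠ ⊤ := evalC_ne_top_of_mem hdfin hxpos
            rw [hC x hxt, hC1, one_mul]
          rw [heq]
          have h2 := evalC_mono_of_leK (ExtF_harmonic hψH) hdnn (single_one_nonneg a) hdleK
          rwa [evalC_single] at h2
  · rw [hC a hat, hC1, one_mul]

/-- Restriction of an indecomposable function to an ideal is indecomposable. -/
lemma restrict_indec {φ : G.V → ℝ≥0∞} (hφ : G.Indecomposable φ)
    (hne : ∃ μ ∈ I, φ μ ≠ 0) :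
    (G.restrict I hI).Indecomposable (fun v : ↥I => φ v.1) := by
  obtain ⟨μ, hμI, hμ0⟩ := hne
  refine ⟨restrict_fos hφ.1, ⟨⟨μ, hμI⟩, hμ0⟩, ?_⟩
  rintro ρ hρfos hρle ⟨v₀, hv₀t, hv₀0⟩
  have hρH := harm_of_fos hρfos
  have hχle : ∀ a, ExtF hI ρ a ≤ φ a := ExtF_le_harmonic (harm_of_fos hφ.1) hρle
  obtain ⟨C, hC⟩ := hφ.2.2 (ExtF hI ρ) (extend_fos hρfos) hχle
    ⟨v₀.1, hv₀t, by rw [ExtF_agree hρH v₀.2, Subtype.coe_eta]; exact hv₀0⟩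
  refine ⟨C, fun v hvt => ?_⟩
  have := hC v.1 hvt
  rwa [ExtF_agree hρH v.2, Subtype.coe_eta] at this

/-- Extension of an indecomposable function is indecomposable. -/
lemma ext_indec {ψ : ↥I → ℝ≥0∞} (hψ : (G.restrict I hI).Indecomposable ψ) :
    G.Indecomposable (ExtF hI ψ) := by
  have hψH := harm_of_fos hψ.1
  obtain ⟨μ₀, hμ₀⟩ := hψ.2.1
  refine ⟨extend_fos hψ.1,
    ⟨μ₀.1, by rw [ExtF_agree hψH μ₀.2, Subtype.coe_eta]; exact hμ₀⟩, ?_⟩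
  rintro χ hχfos hχle ⟨a₀, ha₀t, ha₀0⟩
  have hχH := harm_of_fos hχfos
  have hrep : ∀ a, ExtF hI ψ a ≠ ⊤ → χ a = ⨆ N, Tlev hI (fun v : ↥I => χ v.1) a N :=
    fun a ha => sup_Tlev_of_dominated hψH hχH hχle ha
  -- find a point of the ideal where ψ is finite and χ is nonzero
  have h1 : (⨆ N, Tlev hI (fun v : ↥I => χ v.1) a₀ N) ≠ 0 := by
    rw [← hrep a₀ ha₀t]; exact ha₀0
  have h2 : ∃ N, Tlev hI (fun v : ↥I => χ v.1) a₀ N ≠ 0 := by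
    by_contra hno
    push_neg at hno
    exact h1 (by simp [hno])
  obtain ⟨N₁, hN₁⟩ := h2
  obtain ⟨v₁, hv₁mem, hv₁⟩ := Finset.exists_ne_zero_of_sum_ne_zero hN₁
  obtain ⟨hd0, hχv₁⟩ := mul_ne_zero_iff.1 hv₁
  have hψv₁t : ψ v₁ ≠ ⊤ := by
    intro ht
    apply ha₀t
    apply top_le_iff.1
    calc (⊤:ℝ≥0∞) = ENNReal.ofReal (G.dim a₀ v₁.1) * ψ v₁ := by
          rw [ht, ENNReal.mul_top hd0]
      _ ≤ Tlev hI ψ a₀ N₁ := Finset.single_le_sum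
            (f := fun μ : ↥I => ENNReal.ofReal (G.dim a₀ μ.1) * ψ μ)
            (fun μ _ => zero_le) hv₁mem
      _ ≤ ExtF hI ψ a₀ := le_iSup (Tlev hI ψ a₀) N₁
  obtain ⟨C, hC⟩ := hψ.2.2 (fun v : ↥I => χ v.1) (restrict_fos hχfos)
    (fun v => le_of_le_of_eq (hχle v.1) (by rw [ExtF_agree hψH v.2, Subtype.coe_eta]))
    ⟨v₁, hψv₁t, hχv₁⟩
  refine ⟨C, fun a hat => ?_⟩
  rw [hrep a hat]
  have hT : ∀ N, Tlev hI (fun v : ↥I => χ v.1) a N = C * Tlev hI ψ a N := by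
    intro N
    rw [Tlev, Tlev, Finset.mul_sum]
    apply Finset.sum_congr rfl
    intro μ hμ
    by_cases hdim : ENNReal.ofReal (G.dim a μ.1) = 0
    · rw [hdim, zero_mul, zero_mul, mul_zero]
    · have hψμt : ψ μ ≠ ⊤ := by
        intro ht
        apply hat
        apply top_le_iff.1
        calc (⊤:ℝ≥0∞) = ENNReal.ofReal (G.dim a μ.1) * ψ μ := by
              rw [ht, ENNReal.mul_top hdim]
          _ ≤ Tlev hI ψ a N := Finset.single_le_sum
                (f := fun ν : ↥I => ENNReal.ofReal (G.dim a ν.1) * ψ ν)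
                (fun ν _ => zero_le) hμ
          _ ≤ ExtF hI ψ a := le_iSup (Tlev hI ψ a) N
      rw [hC μ hψμt]
      ring
  rw [iSup_congr hT, ← ENNReal.mul_iSup]
  rfl

end

end GradedGraph
namespace GradedGraph

lemma finsum_mem_level_eq {G : GradedGraph} (N : ℕ) (f : G.V → ℝ≥0∞) :
    (∑ᶠ μ ∈ {μ : G.V | G.lvl μ = N}, f μ) = ∑ μ ∈ G.level N, f μ := by
  have hset : {μ : G.V | G.lvl μ = N} = ↑(G.level N) := by
    ext μ
    rw [Set.mem_setOf_eq, Finset.mem_coe, mem_level]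
  rw [hset, finsum_mem_coe_finset]

end GradedGraph

/-- restriction is a bijection between indecomposable finite or semifinite
harmonic functions on `Γ` not vanishing identically on the ideal `I` and those on `I`,
with inverse given by the `Ext` limit formula. -/
theorem restriction_bijection (G : GradedGraph) (I : Set G.V) (hI : G.IsIdeal I) :
    ∃ e : {φ : G.V → ℝ≥0∞ // G.Indecomposable φ ∧ ∃ μ ∈ I, φ μ ≠ 0} ≃
          {ψ : (G.restrict I hI).V → ℝ≥0∞ // (G.restrict I hI).Indecomposable ψ},
      (∀ φ, (e φ).1 = fun μ : (G.restrict I hI).V => φ.1 μ.1) ∧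
      (∀ ψ (lam : G.V),
        Tendsto (fun N =>
            ∑ᶠ μ ∈ {μ : (G.restrict I hI).V | (G.restrict I hI).lvl μ = N},
              ENNReal.ofReal (G.dim lam μ.1) * ψ.1 μ)
          atTop (𝓝 ((e.symm ψ).1 lam))) := by

  refine ⟨⟨fun φ => ⟨fun μ : (G.restrict I hI).V => φ.1 μ.1,
      GradedGraph.restrict_indec φ.2.1 φ.2.2⟩,
    fun ψ => ⟨GradedGraph.ExtF hI ψ.1, GradedGraph.ext_indec ψ.2, ?_⟩, ?_, ?_⟩,
    fun φ => rfl, ?_⟩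
  · -- the extension does not vanish on the ideal
    obtain ⟨μ₀, hμ₀⟩ := ψ.2.2.1
    exact ⟨μ₀.1, μ₀.2, by
      rw [GradedGraph.ExtF_agree (GradedGraph.harm_of_fos ψ.2.1) μ₀.2, Subtype.coe_eta]
      exact hμ₀⟩
  · -- left inverse
    intro φ
    exact Subtype.ext (funext fun a => GradedGraph.ext_restrict_eq φ.2.1 φ.2.2 a)
  · -- right inverse
    intro ψ
    apply Subtype.ext
    funext μ
    show GradedGraph.ExtF hI ψ.1 μ.1 = ψ.1 μ
    rw [GradedGraph.ExtF_agree (GradedGraph.harm_of_fos ψ.2.1) μ.2, Subtype.coe_eta]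
  · -- the Ext limit formula
    intro ψ lam
    have hψH : (G.restrict I hI).Harmonic ψ.1 := GradedGraph.harm_of_fos ψ.2.1
    have hT := tendsto_atTop_iSup (GradedGraph.Tlev_mono hψH lam)
    refine hT.congr' (Filter.Eventually.of_forall fun N => ?_) |>.mono_right ?_
    · exact (GradedGraph.finsum_mem_level_eq (G := G.restrict I hI) N _).symm
    · exact le_of_eq rfl
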